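/- Let 0 < α ≤ 1 and 0 ≤ γ₁ ≤ 1-α. The kernel of the Hilfer fractional derivative D^(α,γ₁)_H on X¹_H = {f : I^(1-α-γ₁) f ∈ AC([0,1])} is the one-dimensional space {c·x^(α+γ₁-1) : c ∈ ℝ}. -/

import Mathlib

open MeasureTheory Real Set Filter

open Classical in
/-- Riemann-Liouville fractional integral of order `α` (identity for `α = 0`). -/
noncomputable def RL (α : ℝ) (f : ℝ → ℝ) : ℝ → ℝ :=
  if α = 0 then f
  else fun x => (1 / Real.Gamma α) * ∫ t in (0:ℝ)..x, (x - t) ^ (α - 1) * f t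

/-- `f ∈ L¹(0,1)`. -/
def L1 (f : ℝ → ℝ) : Prop := MeasureTheory.IntegrableOn f (Set.Ioc 0 1)

/-- `g` is absolutely continuous on `[0,1]` with value `c` at `0`:
`g x = c + ∫₀ˣ ψ` for some `ψ ∈ L¹(0,1)`. -/
def ACval (g : ℝ → ℝ) (c : ℝ) : Prop :=
  ∃ ψ : ℝ → ℝ, MeasureTheory.IntegrableOn ψ (Set.Ioc 0 1) ∧
    ∀ x ∈ Set.Ioc (0:ℝ) 1, g x = c + ∫ t in (0:ℝ)..x, ψ t

/-- `g ∈ AC([0,1])`. -/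
def IsAC (g : ℝ → ℝ) : Prop := ∃ c : ℝ, ACval g c

/-! Write `g = I^β f` with `β = 1 - α - γ₁` as `g = c₀ + ∫₀ˣ ψ`. Lebesgue differentiation gives
`g' = ψ` a.e., so the Hilfer derivative vanishes iff `I^γ₁ ψ = 0`. Dirichlet's formula and the Beta
integral give `I^(1-a) (I^a ψ) x = ∫₀ˣ ψ` for `0 < a < 1`, so `I^a` is injective on `L¹`; hence
`ψ = 0`, i.e. `g` is constant. Finally `I^β f` is constant iff `f = c x^(-β)`: one direction is the
power rule `I^β t^(-β) = Γ(1-β)`, the other applies `I^(1-β)` and differentiates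
`∫₀ˣ f = K x^(1-β)`. -/

open intervalIntegral

theorem integral_rpow_mul_one_sub_rpow {a b : ℝ} (ha : 0 < a) (hb : 0 < b) :
    ∫ u in (0:ℝ)..1, u ^ (a - 1) * (1 - u) ^ (b - 1) = Gamma a * Gamma b / Gamma (a + b) := by
  have hcpow : ∫ u in (0:ℝ)..1, ((u ^ (a - 1) * (1 - u) ^ (b - 1) : ℝ) : ℂ)
      = Complex.betaIntegral a b := by
    refine integral_congr fun u hu => ?_
    rw [uIcc_of_le zero_le_one] at hu
    push_cast [Complex.ofReal_cpow hu.1, Complex.ofReal_cpow (sub_nonneg.mpr hu.2)]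
    rfl
  rw [← ProbabilityTheory.beta, ProbabilityTheory.beta_eq_betaIntegralReal a b ha hb, ← hcpow,
    intervalIntegral.integral_ofReal, Complex.ofReal_re]

theorem intervalIntegrable_sub_rpow_mul_sub_rpow {a b s x : ℝ} (ha : 0 < a) (hb : 0 < b)
    (hsx : s < x) :
    IntervalIntegrable (fun t => (t - s) ^ (a - 1) * (x - t) ^ (b - 1)) volume s x := by
  set m := (s + x) / 2
  have hsm : s < m := by simp only [m]; linarith
  have hmx : m < x := by simp only [m]; linarith
  refine IntervalIntegrable.trans (b := m) ?_ ?_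
  · have hleft : IntervalIntegrable (fun t => (t - s) ^ (a - 1)) volume s m := by
      simpa using (intervalIntegrable_rpow' (r := a - 1) (a := 0) (b := m - s)
        (by linarith)).comp_sub_right s
    refine hleft.mul_continuousOn fun t ht => ?_
    rw [uIcc_of_le hsm.le] at ht
    exact (continuousAt_const.sub continuousAt_id).rpow_const
      (Or.inl (sub_pos.mpr (by linarith [ht.2] : t < x)).ne') |>.continuousWithinAt
  · have hright : IntervalIntegrable (fun t => (x - t) ^ (b - 1)) volume m x := by
      simpa using ((intervalIntegrable_rpow' (r := b - 1) (a := 0) (b := x - m)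
        (by linarith)).comp_sub_left x).symm
    refine hright.continuousOn_mul fun t ht => ?_
    rw [uIcc_of_le hmx.le] at ht
    exact (continuousAt_id.sub continuousAt_const).rpow_const
      (Or.inl (sub_pos.mpr (by linarith [ht.1] : s < t)).ne') |>.continuousWithinAt

theorem integral_sub_rpow_mul_sub_rpow {a b s x : ℝ} (ha : 0 < a) (hb : 0 < b) (hsx : s < x) :
    ∫ t in s..x, (t - s) ^ (a - 1) * (x - t) ^ (b - 1)
      = Gamma a * Gamma b / Gamma (a + b) * (x - s) ^ (a + b - 1) := by
  have hxs : 0 < x - s := sub_pos.mpr hsx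
  have hsubst := smul_integral_comp_mul_add (a := 0) (b := 1)
    (fun t => (t - s) ^ (a - 1) * (x - t) ^ (b - 1)) (x - s) s
  simp only [mul_zero, mul_one, zero_add, sub_add_cancel, smul_eq_mul] at hsubst
  rw [← hsubst, ← integral_rpow_mul_one_sub_rpow ha hb, ← intervalIntegral.integral_mul_const,
    ← intervalIntegral.integral_const_mul]
  refine integral_congr fun u hu => ?_
  rw [uIcc_of_le zero_le_one] at hu
  have hlower : (x - s) * u + s - s = (x - s) * u := by ring
  have hupper : x - ((x - s) * u + s) = (x - s) * (1 - u) := by ring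
  have hpow : (x - s) ^ (a + b - 1) = (x - s) * ((x - s) ^ (a - 1) * (x - s) ^ (b - 1)) := by
    rw [← rpow_add hxs, mul_comm (x - s), ← rpow_add_one hxs.ne']
    ring_nf
  rw [hlower, hupper, mul_rpow hxs.le hu.1, mul_rpow hxs.le (sub_nonneg.mpr hu.2), hpow]
  ring

theorem integral_sub_rpow_mul_sub_rpow_one_sub {a s x : ℝ} (ha : 0 < a) (ha1 : a < 1)
    (hsx : s < x) :
    ∫ t in s..x, (t - s) ^ (a - 1) * (x - t) ^ (1 - a - 1) = Gamma a * Gamma (1 - a) := by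
  rw [integral_sub_rpow_mul_sub_rpow ha (sub_pos.mpr ha1) hsx, add_sub_cancel, sub_self,
    rpow_zero, Gamma_one]
  ring

theorem setIntegral_Ioc_ite_lt_const_left {k : ℝ → ℝ → ℝ} {x s : ℝ} (hs : 0 ≤ s)
    (hsx : s ≤ x) :
    ∫ t in Ioc 0 x, (if s < t then k t s else 0) = ∫ t in s..x, k t s := by
  have hset : Ioc s x = Ioc 0 x ∩ Ioi s := by rw [Ioc_inter_Ioi, max_eq_right hs]
  rw [integral_of_le hsx, hset, ← setIntegral_indicator measurableSet_Ioi]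
  rfl

theorem setIntegral_Ioc_ite_lt_const_right {k : ℝ → ℝ → ℝ} {x t : ℝ} (ht : 0 ≤ t)
    (htx : t ≤ x) :
    ∫ s in Ioc 0 x, (if s < t then k t s else 0) = ∫ s in 0..t, k t s := by
  have hset : Ioo 0 t = Ioc 0 x ∩ Iio t := by
    ext u
    simp only [mem_inter_iff, mem_Ioc, mem_Iio, mem_Ioo]
    exact ⟨fun h => ⟨⟨h.1, by linarith [h.2]⟩, h.2⟩, fun h => ⟨h.1.1, h.2⟩⟩
  rw [integral_of_le ht, integral_Ioc_eq_integral_Ioo (x := 0) (y := t), hset,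
    ← setIntegral_indicator measurableSet_Iio]
  rfl

theorem intervalIntegral_integral_swap_triangle {k : ℝ → ℝ → ℝ} {x : ℝ} (hx : 0 ≤ x)
    (hk : Integrable (fun p : ℝ × ℝ => if p.2 < p.1 then k p.1 p.2 else 0)
      ((volume.restrict (Ioc 0 x)).prod (volume.restrict (Ioc 0 x)))) :
    ∫ t in 0..x, ∫ s in 0..t, k t s = ∫ s in 0..x, ∫ t in s..x, k t s := by
  have hswap := integral_integral_swap (f := fun t s => if s < t then k t s else 0) hk
  rw [integral_of_le hx, integral_of_le hx]
  calc ∫ t in Ioc 0 x, ∫ s in 0..t, k t s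
      = ∫ t in Ioc 0 x, ∫ s in Ioc 0 x, (if s < t then k t s else 0) :=
        setIntegral_congr_fun measurableSet_Ioc fun t ht =>
          (setIntegral_Ioc_ite_lt_const_right ht.1.le ht.2).symm
    _ = ∫ s in Ioc 0 x, ∫ t in Ioc 0 x, (if s < t then k t s else 0) := hswap
    _ = ∫ s in Ioc 0 x, ∫ t in s..x, k t s :=
        setIntegral_congr_fun measurableSet_Ioc fun s hs =>
          setIntegral_Ioc_ite_lt_const_left hs.1.le hs.2

theorem ae_restrict_Ioc_mem_Ioo (a b : ℝ) : ∀ᵐ s ∂volume.restrict (Ioc a b), s ∈ Ioo a b := by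
  rw [Measure.restrict_congr_set Ioo_ae_eq_Ioc.symm]
  exact ae_restrict_mem measurableSet_Ioo

theorem IntervalIntegrable.mono_right_of_mem_Ioc {f : ℝ → ℝ} {a b x : ℝ}
    (hf : IntervalIntegrable f volume a b) (hx : x ∈ Ioc a b) :
    IntervalIntegrable f volume a x :=
  hf.mono_set (uIcc_subset_uIcc left_mem_uIcc (Icc_subset_uIcc (Ioc_subset_Icc_self hx)))

theorem ae_eq_deriv_of_forall_integral_eq {ψ F : ℝ → ℝ} {a b : ℝ}
    (hψ : IntervalIntegrable ψ volume a b) (hF : ∀ x ∈ Ioo a b, ∫ t in a..x, ψ t = F x) :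
    ∀ᵐ x ∂volume.restrict (Ioc a b), ψ x = deriv F x := by
  filter_upwards [ae_restrict_Ioc_mem_Ioo a b,
    ae_restrict_of_ae hψ.ae_hasDerivAt_integral] with x hx hderiv
  have hprimitive := hderiv (Icc_subset_uIcc (Ioo_subset_Icc_self hx)) a left_mem_uIcc
  have hFx : (fun y => ∫ t in a..y, ψ t) =ᶠ[nhds x] F :=
    eventually_of_mem (Ioo_mem_nhds hx.1 hx.2) hF
  exact (hprimitive.congr_of_eventuallyEq hFx.symm).deriv.symm

section AbsolutelyContinuous

variable {g ψ : ℝ → ℝ} {a b c : ℝ}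

theorem deriv_ae_eq_of_eq_add_integral (hψ : IntervalIntegrable ψ volume a b)
    (hg : ∀ x ∈ Ioc a b, g x = c + ∫ t in a..x, ψ t) :
    ∀ᵐ x ∂volume.restrict (Ioc a b), deriv g x = ψ x := by
  filter_upwards [ae_eq_deriv_of_forall_integral_eq hψ (F := fun x => g x - c)
    fun x hx => by rw [hg x (Ioo_subset_Ioc_self hx)]; ring] with x hx
  rw [hx, deriv_sub_const]

theorem exists_ae_eq_const_iff_of_eq_add_integral (hψ : IntervalIntegrable ψ volume a b)
    (hg : ∀ x ∈ Ioc a b, g x = c + ∫ t in a..x, ψ t) :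
    (∃ C, ∀ᵐ x ∂volume.restrict (Ioc a b), g x = C) ↔
      ∀ᵐ x ∂volume.restrict (Ioc a b), ψ x = 0 := by
  constructor
  · rintro ⟨C, hC⟩
    have hae : (fun x => ∫ t in a..x, ψ t) =ᵐ[volume.restrict (Ioo a b)] fun _ => C - c := by
      refine ae_restrict_of_ae_restrict_of_subset Ioo_subset_Ioc_self ?_
      filter_upwards [hC, ae_restrict_mem measurableSet_Ioc] with x hx hxI
      rw [← hx, hg x hxI]
      ring
    have hconst := Measure.eqOn_open_of_ae_eq hae isOpen_Ioo
      ((intervalIntegral.continuousOn_primitive_interval' hψ left_mem_uIcc).mono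
        (Ioo_subset_Icc_self.trans Icc_subset_uIcc)) continuousOn_const
    filter_upwards [ae_eq_deriv_of_forall_integral_eq hψ hconst] with x hx
    rw [hx, deriv_const]
  · intro hψ0
    refine ⟨c, ae_restrict_of_forall_mem measurableSet_Ioc fun x hx => ?_⟩
    rw [hg x hx, intervalIntegral.integral_of_le hx.1.le,
      integral_eq_zero_of_ae (ae_restrict_of_ae_restrict_of_subset
        (Ioc_subset_Ioc_right hx.2) hψ0), add_zero]

end AbsolutelyContinuous

theorem RL_zero_left (f : ℝ → ℝ) : RL 0 f = f := by simp [RL]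

theorem RL_apply_of_ne_zero {a : ℝ} (ha : a ≠ 0) (f : ℝ → ℝ) (x : ℝ) :
    RL a f x = 1 / Gamma a * ∫ t in (0:ℝ)..x, (x - t) ^ (a - 1) * f t := by
  simp [RL, ha]

theorem RL_zero_right (a : ℝ) : RL a 0 = 0 := by
  by_cases ha : a = 0
  · rw [ha, RL_zero_left]
  · ext x; simp [RL_apply_of_ne_zero ha]

theorem RL_rpow {a b x : ℝ} (ha : 0 < a) (hb : 0 < b) (hx : 0 < x) (c : ℝ) :
    RL a (fun t => c * t ^ (b - 1)) x = c * (Gamma b / Gamma (a + b)) * x ^ (a + b - 1) := by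
  have hbeta := integral_sub_rpow_mul_sub_rpow hb ha hx
  simp only [sub_zero] at hbeta
  have hintegrand : ∫ t in (0:ℝ)..x, 1 / Gamma a * ((x - t) ^ (a - 1) * (c * t ^ (b - 1)))
      = ∫ t in (0:ℝ)..x, c / Gamma a * (t ^ (b - 1) * (x - t) ^ (a - 1)) :=
    integral_congr fun t _ => by ring
  rw [RL_apply_of_ne_zero ha.ne', ← intervalIntegral.integral_const_mul, hintegrand,
    intervalIntegral.integral_const_mul, hbeta, add_comm b a]
  field_simp [(Gamma_pos_of_pos ha).ne']

theorem RL_apply_congr_ae {a x : ℝ} (ha : a ≠ 0) (hx : 0 ≤ x) {f g : ℝ → ℝ}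
    (h : f =ᵐ[volume.restrict (Ioc 0 x)] g) : RL a f x = RL a g x := by
  simp only [RL_apply_of_ne_zero ha, intervalIntegral.integral_of_le hx]
  congr 1
  refine integral_congr_ae ?_
  filter_upwards [h] with t ht
  rw [ht]

theorem RL_ae_congr (a : ℝ) {b : ℝ} {f g : ℝ → ℝ} (h : f =ᵐ[volume.restrict (Ioc 0 b)] g) :
    RL a f =ᵐ[volume.restrict (Ioc 0 b)] RL a g := by
  by_cases ha : a = 0
  · simpa [ha, RL_zero_left] using h
  · filter_upwards [ae_restrict_mem measurableSet_Ioc] with x hx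
    exact RL_apply_congr_ae ha hx.1.le
      (ae_restrict_of_ae_restrict_of_subset (Ioc_subset_Ioc_right hx.2) h)

theorem integrable_ite_lt_sub_rpow_mul_sub_rpow {a x : ℝ} (ha : 0 < a) (ha1 : a < 1)
    {ψ : ℝ → ℝ} (hψ : IntegrableOn ψ (Ioc 0 x)) :
    Integrable (fun p : ℝ × ℝ =>
        if p.2 < p.1 then (p.1 - p.2) ^ (a - 1) * (x - p.1) ^ (1 - a - 1) * ψ p.2 else 0)
      ((volume.restrict (Ioc 0 x)).prod (volume.restrict (Ioc 0 x))) := by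
  set k : ℝ → ℝ → ℝ := fun t s => (t - s) ^ (a - 1) * (x - t) ^ (1 - a - 1) * ψ s with hk
  have hmeas : AEStronglyMeasurable (fun p : ℝ × ℝ => if p.2 < p.1 then k p.1 p.2 else 0)
      ((volume.restrict (Ioc 0 x)).prod (volume.restrict (Ioc 0 x))) := by
    show AEStronglyMeasurable ({p : ℝ × ℝ | p.2 < p.1}.indicator fun p => k p.1 p.2) _
    refine AEStronglyMeasurable.indicator ?_ (measurableSet_lt measurable_snd measurable_fst)
    exact (Measurable.aestronglyMeasurable (by fun_prop)).mul hψ.aestronglyMeasurable.comp_snd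
  rw [integrable_prod_iff' hmeas]
  constructor
  · filter_upwards [ae_restrict_Ioc_mem_Ioo 0 x] with s hs
    have hIoc : IntegrableOn (fun t => k t s) (Ioc s x) :=
      ((intervalIntegrable_iff_integrableOn_Ioc_of_le hs.2.le).mp
        (intervalIntegrable_sub_rpow_mul_sub_rpow ha (sub_pos.mpr ha1) hs.2)).mul_const (ψ s)
    show Integrable ((Ioi s).indicator fun t => k t s) _
    rwa [integrable_indicator_iff measurableSet_Ioi, IntegrableOn,
      Measure.restrict_restrict measurableSet_Ioi, inter_comm, Ioc_inter_Ioi,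
      max_eq_right hs.1.le]
  · refine (hψ.norm.const_mul (Gamma a * Gamma (1 - a))).congr ?_
    filter_upwards [ae_restrict_Ioc_mem_Ioo 0 x] with s hs
    simp only [apply_ite (‖·‖), norm_zero]
    rw [setIntegral_Ioc_ite_lt_const_left (k := fun t s => ‖k t s‖) hs.1.le hs.2.le,
      ← integral_sub_rpow_mul_sub_rpow_one_sub ha ha1 hs.2,
      ← intervalIntegral.integral_mul_const]
    refine integral_congr fun t ht => ?_
    rw [uIcc_of_le hs.2.le] at ht
    simp only [hk, norm_mul, norm_of_nonneg (rpow_nonneg (sub_nonneg.mpr ht.1) _),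
      norm_of_nonneg (rpow_nonneg (sub_nonneg.mpr ht.2) _)]

theorem RL_one_sub_RL {a x : ℝ} (ha : 0 < a) (ha1 : a < 1) (hx : 0 ≤ x) {ψ : ℝ → ℝ}
    (hψ : IntervalIntegrable ψ volume 0 x) :
    RL (1 - a) (RL a ψ) x = ∫ s in (0:ℝ)..x, ψ s := by
  replace hψ := (intervalIntegrable_iff_integrableOn_Ioc_of_le hx).mp hψ
  have hinner : ∀ t, (x - t) ^ (1 - a - 1) * RL a ψ t
      = 1 / Gamma a * ∫ s in (0:ℝ)..t, (t - s) ^ (a - 1) * (x - t) ^ (1 - a - 1) * ψ s :=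
    fun t => by
      rw [RL_apply_of_ne_zero ha.ne', ← intervalIntegral.integral_const_mul,
        ← intervalIntegral.integral_const_mul, ← intervalIntegral.integral_const_mul]
      exact integral_congr fun s _ => by ring
  have houter : ∀ s ∈ Ioo 0 x, ∫ t in s..x, (t - s) ^ (a - 1) * (x - t) ^ (1 - a - 1) * ψ s
      = Gamma a * Gamma (1 - a) * ψ s := fun s hs => by
    rw [intervalIntegral.integral_mul_const, integral_sub_rpow_mul_sub_rpow_one_sub ha ha1 hs.2]
  have hΓa : Gamma a ≠ 0 := (Gamma_pos_of_pos ha).ne'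
  have hΓa' : Gamma (1 - a) ≠ 0 := (Gamma_pos_of_pos (sub_pos.mpr ha1)).ne'
  calc RL (1 - a) (RL a ψ) x
      = 1 / Gamma (1 - a) * (1 / Gamma a * ∫ t in (0:ℝ)..x, ∫ s in (0:ℝ)..t,
          (t - s) ^ (a - 1) * (x - t) ^ (1 - a - 1) * ψ s) := by
        rw [RL_apply_of_ne_zero (sub_pos.mpr ha1).ne', integral_congr fun t _ => hinner t,
          intervalIntegral.integral_const_mul]
    _ = 1 / Gamma (1 - a) * (1 / Gamma a * ∫ s in (0:ℝ)..x, ∫ t in s..x,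
          (t - s) ^ (a - 1) * (x - t) ^ (1 - a - 1) * ψ s) := by
        rw [intervalIntegral_integral_swap_triangle hx
          (integrable_ite_lt_sub_rpow_mul_sub_rpow ha ha1 hψ)]
    _ = 1 / Gamma (1 - a) * (1 / Gamma a * ∫ s in (0:ℝ)..x, Gamma a * Gamma (1 - a) * ψ s) := by
        rw [integral_of_le hx, integral_of_le hx, integral_Ioc_eq_integral_Ioo,
          integral_Ioc_eq_integral_Ioo, setIntegral_congr_fun measurableSet_Ioo houter]
    _ = ∫ s in (0:ℝ)..x, ψ s := by
        rw [intervalIntegral.integral_const_mul]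
        field_simp

theorem RL_ae_eq_zero_iff {a b : ℝ} (ha : 0 ≤ a) (ha1 : a < 1) {ψ : ℝ → ℝ}
    (hψ : IntervalIntegrable ψ volume 0 b) :
    (∀ᵐ x ∂volume.restrict (Ioc 0 b), RL a ψ x = 0) ↔
      ∀ᵐ x ∂volume.restrict (Ioc 0 b), ψ x = 0 := by
  rcases ha.eq_or_lt with rfl | ha
  · rw [RL_zero_left]
  refine ⟨fun h => ?_, fun h => ?_⟩
  · have hprimitive : ∀ x ∈ Ioo 0 b, ∫ t in (0:ℝ)..x, ψ t = (fun _ => (0:ℝ)) x :=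
      fun x hx => by
        have hxI : x ∈ Ioc 0 b := Ioo_subset_Ioc_self hx
        rw [← RL_one_sub_RL ha ha1 hx.1.le (hψ.mono_right_of_mem_Ioc hxI),
          RL_apply_congr_ae (sub_pos.mpr ha1).ne' hx.1.le (g := 0)
            (ae_restrict_of_ae_restrict_of_subset (Ioc_subset_Ioc_right hxI.2) h),
          RL_zero_right, Pi.zero_apply]
    filter_upwards [ae_eq_deriv_of_forall_integral_eq hψ hprimitive] with x hx
    rw [hx, deriv_const]
  · filter_upwards [RL_ae_congr a (g := 0) h] with x hx
    rw [hx, RL_zero_right, Pi.zero_apply]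

theorem exists_RL_ae_eq_const_iff {β b : ℝ} (hβ0 : 0 ≤ β) (hβ1 : β < 1) {f : ℝ → ℝ}
    (hf : IntervalIntegrable f volume 0 b) :
    (∃ C, ∀ᵐ x ∂volume.restrict (Ioc 0 b), RL β f x = C) ↔
      ∃ c, ∀ᵐ x ∂volume.restrict (Ioc 0 b), f x = c * x ^ (-β) := by
  rcases hβ0.eq_or_lt with rfl | hβ
  · simp [RL_zero_left]
  refine ⟨fun ⟨C, hC⟩ => ?_, fun ⟨c, hc⟩ => ?_⟩
  · set K := C * (Gamma 1 / Gamma (1 - β + 1))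
    have hprimitive : ∀ x ∈ Ioo 0 b, ∫ t in (0:ℝ)..x, f t = K * x ^ (1 - β) := fun x hx => by
      have hxI : x ∈ Ioc 0 b := Ioo_subset_Ioc_self hx
      have hCx : RL β f =ᵐ[volume.restrict (Ioc 0 x)] fun t => C * t ^ ((1:ℝ) - 1) := by
        filter_upwards [ae_restrict_of_ae_restrict_of_subset (Ioc_subset_Ioc_right hxI.2) hC]
          with t ht
        rw [ht, sub_self, rpow_zero, mul_one]
      rw [← RL_one_sub_RL hβ hβ1 hx.1.le (hf.mono_right_of_mem_Ioc hxI),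
        RL_apply_congr_ae (sub_pos.mpr hβ1).ne' hx.1.le hCx,
        RL_rpow (sub_pos.mpr hβ1) one_pos hx.1, add_sub_cancel_right]
    refine ⟨K * (1 - β), ?_⟩
    filter_upwards [ae_eq_deriv_of_forall_integral_eq hf hprimitive,
      ae_restrict_mem measurableSet_Ioc] with x hx hxI
    rw [hx, ((hasDerivAt_rpow_const (Or.inl hxI.1.ne')).const_mul K).deriv, sub_sub_cancel_left]
    ring
  · refine ⟨c * (Gamma (1 - β) / Gamma (β + (1 - β))), ?_⟩
    filter_upwards [ae_restrict_mem measurableSet_Ioc] with x hx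
    have hcx : f =ᵐ[volume.restrict (Ioc 0 x)] fun t => c * t ^ ((1 - β) - 1) := by
      filter_upwards [ae_restrict_of_ae_restrict_of_subset (Ioc_subset_Ioc_right hx.2) hc]
        with t ht
      rw [ht, sub_sub_cancel_left]
    rw [RL_apply_congr_ae hβ.ne' hx.1.le hcx, RL_rpow hβ (sub_pos.mpr hβ1) hx.1,
      add_sub_cancel, sub_self, rpow_zero, mul_one]

theorem hilfer_kernel_general (α γ₁ : ℝ) (hα0 : 0 < α)
    (hγ0 : 0 ≤ γ₁) (hγ1 : γ₁ ≤ 1 - α)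
    (f : ℝ → ℝ) (hf : L1 f) (hdom : IsAC (RL (1 - α - γ₁) f)) :
    (∀ᵐ x ∂(volume.restrict (Set.Ioc (0:ℝ) 1)),
        RL γ₁ (deriv (RL (1 - α - γ₁) f)) x = 0) ↔
      ∃ c : ℝ, ∀ᵐ x ∂(volume.restrict (Set.Ioc (0:ℝ) 1)),
        f x = c * x ^ (α + γ₁ - 1) := by
  obtain ⟨c₀, ψ, hψ, hg⟩ := hdom
  have hψ' := (intervalIntegrable_iff_integrableOn_Ioc_of_le zero_le_one).mpr hψ
  have hf' := (intervalIntegrable_iff_integrableOn_Ioc_of_le zero_le_one).mpr hf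
  have hderiv := RL_ae_congr γ₁ (deriv_ae_eq_of_eq_add_integral hψ' hg)
  rw [show α + γ₁ - 1 = -(1 - α - γ₁) by ring,
    ← exists_RL_ae_eq_const_iff (by linarith) (by linarith) hf',
    exists_ae_eq_const_iff_of_eq_add_integral hψ' hg, ← RL_ae_eq_zero_iff hγ0 (by linarith) hψ']
  exact eventually_congr (hderiv.mono fun x hx => by rw [hx])

/-- The kernel of the Hilfer fractional derivative on
`X¹_H = {f : I^(1-α-γ₁) f ∈ AC([0,1])}` is `{c · x^(α+γ₁-1)}`. -/
theorem hilfer_kernel (α γ₁ : ℝ) (hα0 : 0 < α) (hα1 : α ≤ 1)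
    (hγ0 : 0 ≤ γ₁) (hγ1 : γ₁ ≤ 1 - α)
    (f : ℝ → ℝ) (hf : L1 f) (hdom : IsAC (RL (1 - α - γ₁) f)) :
    (∀ᵐ x ∂(volume.restrict (Set.Ioc (0:ℝ) 1)),
        RL γ₁ (deriv (RL (1 - α - γ₁) f)) x = 0) ↔
      ∃ c : ℝ, ∀ᵐ x ∂(volume.restrict (Set.Ioc (0:ℝ) 1)),
        f x = c * x ^ (α + γ₁ - 1) :=
  hilfer_kernel_general α γ₁ hα0 hγ0 hγ1 f hf hdom
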